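/- Let g(x,y,z) = x³ + y³ + z³ − 3x − 3y − 3z. Then: (i) the real critical points of g are exactly the eight points of {−1,1}³; (ii) every such point a = (a₁,a₂,a₃) is a nondegenerate critical point whose Morse index equals the number of indices i with aᵢ = −1, and g(a) = −2(a₁ + a₂ + a₃); (iii) consequently, for every real C ∉ {−6,−2,2,6}, the signed sum Σ (−1)^{#{i : aᵢ = −1}}, taken over all a ∈ {−1,1}³ with g(a) + C < 0, equals 0 if C < −6 or C > 6, equals 1 if −6 < C < −2 or 2 < C < 6, and equals −2 if −2 < C < 2. -/

import Mathlib

noncomputable section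

open Set

open scoped Classical

/-- The Hessian of `f : ℝ³ → ℝ` at `a`, as a bilinear function. -/
def hessian (f : ℝ × ℝ × ℝ → ℝ) (a v w : ℝ × ℝ × ℝ) : ℝ :=
  fderiv ℝ (fderiv ℝ f) a v w

/-- `a` is a nondegenerate critical point of `f`: the derivative of `f` vanishes at `a`
and the Hessian of `f` at `a` is a nondegenerate bilinear form. -/
def IsNondegCritPt (f : ℝ × ℝ × ℝ → ℝ) (a : ℝ × ℝ × ℝ) : Prop :=
  fderiv ℝ f a = 0 ∧ ∀ v : ℝ × ℝ × ℝ, v ≠ 0 → ∃ w : ℝ × ℝ × ℝ, hessian f a v w ≠ 0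

/-- The Morse index of `f` at `a`: the maximal dimension of a subspace on which the
Hessian of `f` at `a` is negative definite. -/
def morseIndex (f : ℝ × ℝ × ℝ → ℝ) (a : ℝ × ℝ × ℝ) : ℕ :=
  sSup {k : ℕ | ∃ W : Submodule ℝ (ℝ × ℝ × ℝ), Module.finrank ℝ ↥W = k ∧
    ∀ v ∈ W, v ≠ 0 → hessian f a v v < 0}

/-- The polynomial `g = x³ + y³ + z³ - 3x - 3y - 3z`. -/
def g (v : ℝ × ℝ × ℝ) : ℝ :=
  v.1 ^ 3 + v.2.1 ^ 3 + v.2.2 ^ 3 - 3 * v.1 - 3 * v.2.1 - 3 * v.2.2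

/-- The number of coordinates of `a` equal to `-1`. -/
def negCount (a : ℝ × ℝ × ℝ) : ℕ :=
  (if a.1 = -1 then 1 else 0) + (if a.2.1 = -1 then 1 else 0) + (if a.2.2 = -1 then 1 else 0)

/-- The cube `{-1,1}³` as a finite set. -/
def cube : Finset (ℝ × ℝ × ℝ) :=
  ({-1, 1} : Finset ℝ) ×ˢ (({-1, 1} : Finset ℝ) ×ˢ ({-1, 1} : Finset ℝ))

/-- The invariant `Ind` of `g + C`: the signed sum `Σ (-1)^{#{i : aᵢ = -1}}` over all
`a ∈ {-1,1}³` with `g a + C < 0`. -/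
def indSum (C : ℝ) : ℤ :=
  ∑ a ∈ cube, if g a + C < 0 then (-1 : ℤ) ^ negCount a else 0

/-!
`g` is separable: `g(x, y, z) = h x + h y + h z` with `h t = t³ - 3t`, so its gradient
vanishes exactly where `h' = 3t² - 3` vanishes in every coordinate, and its Hessian at `a` is
the diagonal form `diag(6a₁, 6a₂, 6a₃)`. At a vertex of `{-1, 1}³` the diagonal entries are
`±6`, so the form is nondegenerate, and its Morse index is the number of negative entries: the
coordinate subspace of the negative entries is negative definite, while a negative definite
subspace meets the complementary coordinate subspace, on which the form is nonnegative, only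
in `0`. Finally `h(±1) = ∓2`, and `Ind` is read off from the eight vertices.
-/

open Module

local notation "E" => ℝ × ℝ × ℝ

section NegativeIndex

variable {V : Type*} [AddCommGroup V] [Module ℝ V]

def negativeIndex (Q : V → ℝ) : ℕ :=
  sSup {k : ℕ | ∃ W : Submodule ℝ V, finrank ℝ W = k ∧ ∀ v ∈ W, v ≠ 0 → Q v < 0}

theorem finrank_add_finrank_le_of_neg_of_nonneg [FiniteDimensional ℝ V] {Q : V → ℝ}
    {W P : Submodule ℝ V} (hW : ∀ v ∈ W, v ≠ 0 → Q v < 0) (hP : ∀ v ∈ P, 0 ≤ Q v) :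
    finrank ℝ W + finrank ℝ P ≤ finrank ℝ V := by
  have hWP : W ⊓ P = ⊥ := by
    refine (Submodule.eq_bot_iff _).mpr fun v hv => ?_
    by_contra hv0
    exact (hW v hv.1 hv0).not_ge (hP v hv.2)
  have hsup := Submodule.finrank_sup_add_finrank_inf_eq W P
  rw [hWP, finrank_bot, add_zero] at hsup
  exact hsup ▸ Submodule.finrank_le (W ⊔ P)

theorem negativeIndex_eq_finrank [FiniteDimensional ℝ V] {Q : V → ℝ} {N P : Submodule ℝ V}
    (hN : ∀ v ∈ N, v ≠ 0 → Q v < 0) (hP : ∀ v ∈ P, 0 ≤ Q v)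
    (hNP : finrank ℝ N + finrank ℝ P = finrank ℝ V) :
    negativeIndex Q = finrank ℝ N := by
  refine IsGreatest.csSup_eq ⟨⟨N, rfl, hN⟩, ?_⟩
  rintro k ⟨W, rfl, hW⟩
  have := finrank_add_finrank_le_of_neg_of_nonneg hW hP
  omega

end NegativeIndex

theorem Submodule.finrank_prod {M N : Type*} [AddCommGroup M] [Module ℝ M] [AddCommGroup N]
    [Module ℝ N] [FiniteDimensional ℝ M] [FiniteDimensional ℝ N]
    (p : Submodule ℝ M) (q : Submodule ℝ N) :
    finrank ℝ (p.prod q) = finrank ℝ p + finrank ℝ q := by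
  let e : p.prod q ≃ₗ[ℝ] p × q :=
    { toFun := fun x => (⟨x.1.1, x.2.1⟩, ⟨x.1.2, x.2.2⟩)
      invFun := fun y => ⟨(y.1.1, y.2.1), ⟨y.1.2, y.2.2⟩⟩
      left_inv := fun _ => rfl
      right_inv := fun _ => rfl
      map_add' := fun _ _ => rfl
      map_smul' := fun _ _ => rfl }
  rw [e.finrank_eq, Module.finrank_prod]

section Line

def negLine (c : ℝ) : Submodule ℝ ℝ := if c < 0 then ⊤ else ⊥

def nonnegLine (c : ℝ) : Submodule ℝ ℝ := if c < 0 then ⊥ else ⊤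

variable {c x : ℝ}

theorem finrank_negLine (c : ℝ) : finrank ℝ (negLine c) = if c < 0 then 1 else 0 := by
  by_cases hc : c < 0
  · rw [show negLine c = ⊤ from if_pos hc, if_pos hc, finrank_top, finrank_self]
  · rw [show negLine c = ⊥ from if_neg hc, if_neg hc, finrank_bot]

theorem finrank_nonnegLine (c : ℝ) : finrank ℝ (nonnegLine c) = if c < 0 then 0 else 1 := by
  by_cases hc : c < 0
  · rw [show nonnegLine c = ⊥ from if_pos hc, if_pos hc, finrank_bot]
  · rw [show nonnegLine c = ⊤ from if_neg hc, if_neg hc, finrank_top, finrank_self]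

theorem mul_mul_self_neg_of_mem_negLine (hx : x ∈ negLine c) (hx0 : x ≠ 0) : c * x * x < 0 := by
  unfold negLine at hx
  split_ifs at hx with hc
  · rw [mul_assoc]; exact mul_neg_of_neg_of_pos hc (mul_self_pos.mpr hx0)
  · exact absurd ((Submodule.mem_bot ℝ).mp hx) hx0

theorem mul_mul_self_nonpos_of_mem_negLine (hx : x ∈ negLine c) : c * x * x ≤ 0 := by
  rcases eq_or_ne x 0 with rfl | hx0
  · rw [mul_zero]
  · exact (mul_mul_self_neg_of_mem_negLine hx hx0).le

theorem mul_mul_self_nonneg_of_mem_nonnegLine (hx : x ∈ nonnegLine c) : 0 ≤ c * x * x := by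
  unfold nonnegLine at hx
  split_ifs at hx with hc
  · rw [(Submodule.mem_bot ℝ).mp hx, mul_zero]
  · rw [mul_assoc]; exact mul_nonneg (not_lt.mp hc) (mul_self_nonneg x)

end Line

theorem ne_zero_iff_coord {v : E} : v ≠ 0 ↔ v.1 ≠ 0 ∨ v.2.1 ≠ 0 ∨ v.2.2 ≠ 0 := by
  simp only [ne_eq, Prod.ext_iff, Prod.fst_zero, Prod.snd_zero, not_and_or]

def diagForm (c v w : E) : ℝ :=
  c.1 * v.1 * w.1 + c.2.1 * v.2.1 * w.2.1 + c.2.2 * v.2.2 * w.2.2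

theorem negativeIndex_diagForm (c : E) :
    negativeIndex (fun v => diagForm c v v) =
      (if c.1 < 0 then 1 else 0) + (if c.2.1 < 0 then 1 else 0) +
        (if c.2.2 < 0 then 1 else 0) := by
  let N : Submodule ℝ E := (negLine c.1).prod ((negLine c.2.1).prod (negLine c.2.2))
  let P : Submodule ℝ E := (nonnegLine c.1).prod ((nonnegLine c.2.1).prod (nonnegLine c.2.2))
  have hN : ∀ v ∈ N, v ≠ 0 → diagForm c v v < 0 := by
    intro v hv hv0
    obtain ⟨hx, hy, hz⟩ := hv
    have tx := mul_mul_self_nonpos_of_mem_negLine hx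
    have ty := mul_mul_self_nonpos_of_mem_negLine hy
    have tz := mul_mul_self_nonpos_of_mem_negLine hz
    simp only [diagForm]
    rcases ne_zero_iff_coord.mp hv0 with h0 | h0 | h0
    · linarith [mul_mul_self_neg_of_mem_negLine hx h0]
    · linarith [mul_mul_self_neg_of_mem_negLine hy h0]
    · linarith [mul_mul_self_neg_of_mem_negLine hz h0]
  have hP : ∀ v ∈ P, 0 ≤ diagForm c v v := by
    rintro ⟨x, y, z⟩ ⟨hx, hy, hz⟩
    have := mul_mul_self_nonneg_of_mem_nonnegLine hx
    have := mul_mul_self_nonneg_of_mem_nonnegLine hy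
    have := mul_mul_self_nonneg_of_mem_nonnegLine hz
    simp only [diagForm]
    linarith
  have hNP : finrank ℝ N + finrank ℝ P = finrank ℝ E := by
    simp only [N, P, Submodule.finrank_prod, finrank_negLine, finrank_nonnegLine, finrank_prod,
      finrank_self]
    split_ifs <;> rfl
  rw [negativeIndex_eq_finrank hN hP hNP]
  simp only [N, Submodule.finrank_prod, finrank_negLine, add_assoc]

theorem diagForm_nondegenerate {c : E} (h1 : c.1 ≠ 0) (h2 : c.2.1 ≠ 0) (h3 : c.2.2 ≠ 0)
    {v : E} (hv : v ≠ 0) : ∃ w, diagForm c v w ≠ 0 := by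
  refine ⟨(c.1 * v.1, c.2.1 * v.2.1, c.2.2 * v.2.2), ne_of_gt ?_⟩
  have hsq : diagForm c v (c.1 * v.1, c.2.1 * v.2.1, c.2.2 * v.2.2) =
      (c.1 * v.1) ^ 2 + (c.2.1 * v.2.1) ^ 2 + (c.2.2 * v.2.2) ^ 2 := by
    simp only [diagForm]; ring
  rw [hsq]
  have := sq_nonneg (c.1 * v.1)
  have := sq_nonneg (c.2.1 * v.2.1)
  have := sq_nonneg (c.2.2 * v.2.2)
  rcases ne_zero_iff_coord.mp hv with h | h | h
  · linarith [sq_pos_of_ne_zero (mul_ne_zero h1 h)]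
  · linarith [sq_pos_of_ne_zero (mul_ne_zero h2 h)]
  · linarith [sq_pos_of_ne_zero (mul_ne_zero h3 h)]

def proj₁ : E →L[ℝ] ℝ := ContinuousLinearMap.fst ℝ ℝ (ℝ × ℝ)

def proj₂ : E →L[ℝ] ℝ :=
  (ContinuousLinearMap.fst ℝ ℝ ℝ).comp (ContinuousLinearMap.snd ℝ ℝ (ℝ × ℝ))

def proj₃ : E →L[ℝ] ℝ :=
  (ContinuousLinearMap.snd ℝ ℝ ℝ).comp (ContinuousLinearMap.snd ℝ ℝ (ℝ × ℝ))

@[simp] theorem proj₁_apply (v : E) : proj₁ v = v.1 := rfl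
@[simp] theorem proj₂_apply (v : E) : proj₂ v = v.2.1 := rfl
@[simp] theorem proj₃_apply (v : E) : proj₃ v = v.2.2 := rfl

theorem hasFDerivAt_add_add_comp_proj {F : Type*} [NormedAddCommGroup F] [NormedSpace ℝ F]
    {φ ψ χ : ℝ → F} {φ' ψ' χ' : F} {a : E} (hφ : HasDerivAt φ φ' a.1)
    (hψ : HasDerivAt ψ ψ' a.2.1) (hχ : HasDerivAt χ χ' a.2.2) :
    HasFDerivAt (fun v : E => φ v.1 + ψ v.2.1 + χ v.2.2)
      (proj₁.smulRight φ' + proj₂.smulRight ψ' + proj₃.smulRight χ') a := by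
  have h₁ := hφ.hasFDerivAt.comp a proj₁.hasFDerivAt
  have h₂ := hψ.hasFDerivAt.comp a proj₂.hasFDerivAt
  have h₃ := hχ.hasFDerivAt.comp a proj₃.hasFDerivAt
  exact ((h₁.add h₂).add h₃).congr_fderiv (by ext <;> simp)

theorem smul_proj_add_eq_zero_iff {c₁ c₂ c₃ : ℝ} :
    c₁ • proj₁ + c₂ • proj₂ + c₃ • proj₃ = 0 ↔
      c₁ = 0 ∧ c₂ = 0 ∧ c₃ = 0 := by
  refine ⟨fun h => ⟨?_, ?_, ?_⟩, fun ⟨h₁, h₂, h₃⟩ => by simp [h₁, h₂, h₃]⟩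
  · simpa using DFunLike.congr_fun h (1, 0, 0)
  · simpa using DFunLike.congr_fun h (0, 1, 0)
  · simpa using DFunLike.congr_fun h (0, 0, 1)

def cubic (t : ℝ) : ℝ := t ^ 3 - 3 * t

theorem g_eq_sum_cubic : g = fun v => cubic v.1 + cubic v.2.1 + cubic v.2.2 := by
  funext v; simp only [g, cubic]; ring

theorem hasDerivAt_cubic (t : ℝ) : HasDerivAt cubic (3 * t ^ 2 - 3) t :=
  ((hasDerivAt_pow 3 t).sub ((hasDerivAt_id t).const_mul 3)).congr_deriv (by norm_num)

theorem hasDerivAt_cubic_deriv (t : ℝ) : HasDerivAt (fun t : ℝ => 3 * t ^ 2 - 3) (6 * t) t :=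
  (((hasDerivAt_pow 2 t).const_mul 3).sub_const 3).congr_deriv (by norm_num; ring)

theorem fderiv_g (a : E) :
    fderiv ℝ g a = (3 * a.1 ^ 2 - 3) • proj₁ + (3 * a.2.1 ^ 2 - 3) • proj₂
      + (3 * a.2.2 ^ 2 - 3) • proj₃ := by
  rw [g_eq_sum_cubic, (hasFDerivAt_add_add_comp_proj (hasDerivAt_cubic _) (hasDerivAt_cubic _)
    (hasDerivAt_cubic _)).fderiv]
  ext <;> simp [mul_comm]

theorem hessian_g (a : E) : hessian g a = diagForm ((6 : ℝ) • a) := by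
  have hD : fderiv ℝ g = fun b : E =>
      (3 * b.1 ^ 2 - 3) • proj₁ + (3 * b.2.1 ^ 2 - 3) • proj₂ + (3 * b.2.2 ^ 2 - 3) • proj₃ :=
    funext fderiv_g
  have hD' := hasFDerivAt_add_add_comp_proj ((hasDerivAt_cubic_deriv a.1).smul_const proj₁)
    ((hasDerivAt_cubic_deriv a.2.1).smul_const proj₂)
    ((hasDerivAt_cubic_deriv a.2.2).smul_const proj₃)
  ext v w
  rw [hessian, hD, hD'.fderiv]
  simp only [add_apply, ContinuousLinearMap.smulRight_apply, proj₁_apply,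
    proj₂_apply, proj₃_apply, smul_apply, smul_eq_mul, diagForm,
    Prod.smul_fst, Prod.smul_snd]
  ring

theorem cubic_deriv_eq_zero_iff {t : ℝ} : 3 * t ^ 2 - 3 = 0 ↔ t = -1 ∨ t = 1 := by
  rw [sub_eq_zero, show (3 : ℝ) = 3 * 1 by norm_num, mul_assoc, mul_right_inj' three_ne_zero,
    one_mul, sq_eq_one_iff, or_comm]

theorem fderiv_g_eq_zero_iff {a : E} :
    fderiv ℝ g a = 0 ↔
      (a.1 = -1 ∨ a.1 = 1) ∧ (a.2.1 = -1 ∨ a.2.1 = 1) ∧ (a.2.2 = -1 ∨ a.2.2 = 1) := by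
  simp only [fderiv_g, smul_proj_add_eq_zero_iff, cubic_deriv_eq_zero_iff]

theorem isNondegCritPt_g {a : E} (h₁ : a.1 = -1 ∨ a.1 = 1) (h₂ : a.2.1 = -1 ∨ a.2.1 = 1)
    (h₃ : a.2.2 = -1 ∨ a.2.2 = 1) : IsNondegCritPt g a := by
  refine ⟨fderiv_g_eq_zero_iff.mpr ⟨h₁, h₂, h₃⟩, fun v hv => ?_⟩
  rw [hessian_g]
  exact diagForm_nondegenerate (by rcases h₁ with h | h <;> simp [h])
    (by rcases h₂ with h | h <;> simp [h]) (by rcases h₃ with h | h <;> simp [h]) hv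

theorem morseIndex_g {a : E} (h₁ : a.1 = -1 ∨ a.1 = 1) (h₂ : a.2.1 = -1 ∨ a.2.1 = 1)
    (h₃ : a.2.2 = -1 ∨ a.2.2 = 1) : morseIndex g a = negCount a := by
  have hneg : ∀ t : ℝ, t = -1 ∨ t = 1 → (6 * t < 0 ↔ t = -1) := by
    rintro t (rfl | rfl) <;> norm_num
  change negativeIndex (fun v => hessian g a v v) = _
  simp only [hessian_g, negativeIndex_diagForm, Prod.smul_fst, Prod.smul_snd, smul_eq_mul,
    hneg _ h₁, hneg _ h₂, hneg _ h₃, negCount]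

theorem g_eq_neg_two_mul_sum {a : E} (h₁ : a.1 = -1 ∨ a.1 = 1) (h₂ : a.2.1 = -1 ∨ a.2.1 = 1)
    (h₃ : a.2.2 = -1 ∨ a.2.2 = 1) :
    g a = -2 * (a.1 + a.2.1 + a.2.2) := by
  have hcubic : ∀ t : ℝ, t = -1 ∨ t = 1 → cubic t = -2 * t := by
    rintro t (rfl | rfl) <;> norm_num [cubic]
  simp only [g_eq_sum_cubic, hcubic _ h₁, hcubic _ h₂, hcubic _ h₃]
  ring

/- The vertex with `k` coordinates equal to `-1` has `g = 4k - 6` and sign `(-1)^k`; there are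
`1, 3, 3, 1` of them for `k = 0, 1, 2, 3`. -/
theorem indSum_eq (C : ℝ) :
    indSum C = (if C < 6 then 1 else 0) - 3 * (if C < 2 then 1 else 0)
      + 3 * (if C < -2 then 1 else 0) - (if C < -6 then 1 else 0) := by
  have hne : (-1 : ℝ) ≠ 1 := by norm_num
  simp only [indSum, cube, Finset.sum_product, Finset.sum_pair hne]
  norm_num [g, negCount]
  split_ifs <;> linarith

theorem critical_points_of_g_and_Ind :
    ({a : ℝ × ℝ × ℝ | fderiv ℝ g a = 0} =
      ({-1, 1} : Set ℝ) ×ˢ ((({-1, 1} : Set ℝ)) ×ˢ (({-1, 1} : Set ℝ)))) ∧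
    (∀ a ∈ (({-1, 1} : Set ℝ) ×ˢ ((({-1, 1} : Set ℝ)) ×ˢ (({-1, 1} : Set ℝ)))),
      IsNondegCritPt g a ∧ morseIndex g a = negCount a ∧
        g a = -2 * (a.1 + a.2.1 + a.2.2)) ∧
    (∀ C : ℝ,
      ((C < -6 ∨ 6 < C) → indSum C = 0) ∧
      (((-6 < C ∧ C < -2) ∨ (2 < C ∧ C < 6)) → indSum C = 1) ∧
      ((-2 < C ∧ C < 2) → indSum C = -2)) := by
  refine ⟨?_, ?_, fun C => ⟨?_, ?_, ?_⟩⟩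
  · ext a
    simp only [Set.mem_ofPred_eq, Set.mem_prod, Set.mem_insert_iff, Set.mem_singleton_iff,
      fderiv_g_eq_zero_iff]
  · rintro a ⟨h₁, h₂, h₃⟩
    exact ⟨isNondegCritPt_g h₁ h₂ h₃, morseIndex_g h₁ h₂ h₃, g_eq_neg_two_mul_sum h₁ h₂ h₃⟩
  · rintro (hC | hC) <;> rw [indSum_eq] <;> split_ifs <;> linarith
  · rintro (⟨hC₁, hC₂⟩ | ⟨hC₁, hC₂⟩) <;> rw [indSum_eq] <;> split_ifs <;> linarith
  · rintro ⟨hC₁, hC₂⟩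
    rw [indSum_eq]
    split_ifs <;> linarith
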